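/- Let R be an associative unital ℂ-algebra and let A, B, C, D : ℂ → R be functions; write T(u) for the 2×2 matrix over R with rows (A(u), B(u)) and (C(u), D(u)). Assume the RTT relation T²(v)·T¹(u)·R(u−v) = R(u−v)·T¹(u)·T²(v) holds for all u, v ∈ ℂ, where M¹ = M ⊗ I, M² = I ⊗ M (4×4 Kronecker products) and R(u) = u·Id_4 − i·P with P the flip matrix on ℂ²⊗ℂ² and i the imaginary unit. Then the traces t(u) = A(u) + D(u) commute: t(u)·t(v) = t(v)·t(u) for all u, v ∈ ℂ with u − v ∉ {i, −i}. -/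

import Mathlib

/-!
Away from `u - v = ±i` the R-matrix is invertible, since `R(w) R(-w) = -(w² + 1)`, so the RTT
relation says that `T²(v) T¹(u)` and `T¹(u) T²(v)` are conjugate by a scalar matrix and hence have
the same trace. The trace of `T²(v) T¹(u)` is `t(v) t(u)` and that of `T¹(u) T²(v)` is `t(u) t(v)`.
-/

noncomputable section

open Matrix Kronecker

def Pflip : Matrix (Fin 2 × Fin 2) (Fin 2 × Fin 2) ℂ :=
  Matrix.of fun p q => if p.1 = q.2 ∧ p.2 = q.1 then 1 else 0

def Rmat (u : ℂ) : Matrix (Fin 2 × Fin 2) (Fin 2 × Fin 2) ℂ :=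
  u • (1 : Matrix (Fin 2 × Fin 2) (Fin 2 × Fin 2) ℂ) - Complex.I • Pflip

namespace Matrix

section Kronecker

variable {α : Type*} [Semiring α] {m n : Type*} [Fintype m] [Fintype n] [DecidableEq m]
  [DecidableEq n]

theorem trace_one_kronecker_mul_kronecker_one (X : Matrix m m α) (Y : Matrix n n α) :
    ((1 : Matrix m m α) ⊗ₖ Y * X ⊗ₖ (1 : Matrix n n α)).trace = Y.trace * X.trace := by
  simp [trace, mul_apply, Fintype.sum_prod_type, one_apply, Finset.sum_mul, Finset.mul_sum]

theorem kronecker_one_mul_one_kronecker (X : Matrix m m α) (Y : Matrix n n α) :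
    X ⊗ₖ (1 : Matrix n n α) * (1 : Matrix m m α) ⊗ₖ Y = X ⊗ₖ Y := by
  ext ⟨i, i'⟩ ⟨j, j'⟩
  simp [mul_apply, Fintype.sum_prod_type, one_apply]

theorem trace_kronecker_one_mul_one_kronecker (X : Matrix m m α) (Y : Matrix n n α) :
    (X ⊗ₖ (1 : Matrix n n α) * (1 : Matrix m m α) ⊗ₖ Y).trace = X.trace * Y.trace := by
  rw [kronecker_one_mul_one_kronecker, trace_kronecker]

end Kronecker

section ScalarConjugation

variable {K α n : Type*} [CommSemiring K] [Semiring α] [Algebra K α] [Fintype n]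

theorem trace_map_algebraMap_mul_comm (S : Matrix n n K) (X : Matrix n n α) :
    (S.map (algebraMap K α) * X).trace = (X * S.map (algebraMap K α)).trace := by
  simp only [trace, diag_apply, mul_apply, map_apply]
  rw [Finset.sum_comm]
  exact Finset.sum_congr rfl fun i _ => Finset.sum_congr rfl fun j _ =>
    Algebra.commutes (S j i) (X i j)

theorem trace_eq_of_mul_map_algebraMap_eq [DecidableEq n] {S : Matrix n n K} (hS : IsUnit S)
    {M N : Matrix n n α} (h : M * S.map (algebraMap K α) = S.map (algebraMap K α) * N) :
    M.trace = N.trace := by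
  obtain ⟨U, rfl⟩ := hS
  let f := (algebraMap K α).mapMatrix (m := n)
  have hN : N = f ↑U⁻¹ * (M * f U) := by
    rw [← RingHom.mapMatrix_apply] at h
    rw [h, ← mul_assoc, ← map_mul, Units.inv_mul, map_one, one_mul]
  rw [hN, RingHom.mapMatrix_apply, trace_map_algebraMap_mul_comm, mul_assoc,
    ← RingHom.mapMatrix_apply, ← map_mul, Units.mul_inv, map_one, mul_one]

end ScalarConjugation

end Matrix

theorem Pflip_mul_self : Pflip * Pflip = 1 := by
  ext ⟨i, i'⟩ ⟨j, j'⟩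
  simp only [mul_apply, Pflip, of_apply, Fintype.sum_prod_type, one_apply, Prod.mk.injEq]
  fin_cases i <;> fin_cases i' <;> fin_cases j <;> fin_cases j' <;> simp [Fin.sum_univ_two]

theorem Rmat_mul_Rmat_neg (w : ℂ) : Rmat w * Rmat (-w) = (-(w ^ 2 + 1)) • 1 := by
  simp only [Rmat, sub_mul, mul_sub, smul_mul_smul, one_mul, mul_one, Pflip_mul_self,
    Complex.I_mul_I]
  module

theorem isUnit_Rmat {w : ℂ} (h₁ : w ≠ Complex.I) (h₂ : w ≠ -Complex.I) : IsUnit (Rmat w) := by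
  have hw : -(w ^ 2 + 1) ≠ 0 := by
    have hfactor : w ^ 2 + 1 = (w - Complex.I) * (w + Complex.I) := by
      linear_combination Complex.I_sq
    rw [neg_ne_zero, hfactor]
    exact mul_ne_zero (sub_ne_zero.2 h₁) (by rwa [← sub_neg_eq_add, sub_ne_zero])
  rw [isUnit_iff_isUnit_det]
  refine isUnit_det_of_right_inverse (B := (-(w ^ 2 + 1))⁻¹ • Rmat (-w)) ?_
  rw [mul_smul_comm, Rmat_mul_Rmat_neg, smul_smul, inv_mul_cancel₀ hw, one_smul]

theorem transfer_matrices_commute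
    (R : Type*) [Ring R] [Algebra ℂ R] (A B C D : ℂ → R)
    (T : ℂ → Matrix (Fin 2) (Fin 2) R)
    (hT : ∀ u : ℂ, T u = !![A u, B u; C u, D u])
    (hRTT : ∀ u v : ℂ,
      ((1 : Matrix (Fin 2) (Fin 2) R) ⊗ₖ T v) * (T u ⊗ₖ (1 : Matrix (Fin 2) (Fin 2) R)) *
          (Rmat (u - v)).map (algebraMap ℂ R) =
        (Rmat (u - v)).map (algebraMap ℂ R) * (T u ⊗ₖ (1 : Matrix (Fin 2) (Fin 2) R)) *
          ((1 : Matrix (Fin 2) (Fin 2) R) ⊗ₖ T v)) :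
    ∀ u v : ℂ, u - v ≠ Complex.I → u - v ≠ -Complex.I →
      (A u + D u) * (A v + D v) = (A v + D v) * (A u + D u) := by
  intro u v h₁ h₂
  have htrace := trace_eq_of_mul_map_algebraMap_eq (isUnit_Rmat h₁ h₂)
    ((hRTT u v).trans (mul_assoc _ _ _))
  rw [trace_one_kronecker_mul_kronecker_one, trace_kronecker_one_mul_one_kronecker, hT u, hT v,
    trace_fin_two_of, trace_fin_two_of] at htrace
  exact htrace.symm
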